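/- Let T* be a set of integers ≥ 2 and let s, z ∈ ℂ be such that |z| · ∑_{n∈T*} n^{−Re(s)} < 1 (with the series convergent). Then the family (z^{ℓ(c)} N(c)^{−s}) indexed by compositions c ∈ C_{T*} is summable, 1 − z·∑_{n∈T*} n^{−s} ≠ 0, and ∑_{c∈C_{T*}} z^{ℓ(c)} N(c)^{−s} = 1/(1 − z·∑_{n∈T*} n^{−s}). -/

import Mathlib

/-!
Writing `f n = z n^{-s}`, a composition `c` contributes `∏_{n ∈ c} f n` (the norm is
multiplicative and `n ↦ n^{-s}` is completely multiplicative). Grouping compositions by their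
length `k`, the compositions of length `k` contribute `(∑ f)^k`, absolutely since `∑ ‖f‖ < 1`,
and the geometric series sums to `(1 - ∑ f)⁻¹`.
-/

open Complex

def listForallMemEquiv {α : Type*} (T : Set α) : {l : List α // ∀ a ∈ l, a ∈ T} ≃ List T where
  toFun c := c.1.pmap Subtype.mk c.2
  invFun L := ⟨L.map Subtype.val, fun a ha => by
    obtain ⟨x, -, rfl⟩ := List.mem_map.1 ha
    exact x.2⟩
  left_inv c := Subtype.ext (by simp [List.map_pmap])
  right_inv L := by induction L <;> simp_all

lemma map_val_listForallMemEquiv {α : Type*} (T : Set α) (c : {l : List α // ∀ a ∈ l, a ∈ T}) :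
    (listForallMemEquiv T c).map Subtype.val = c.val := by
  simp [listForallMemEquiv, List.map_pmap]

lemma List.prod_map_natCast_cpow (l : List ℕ) (s : ℂ) :
    (l.map fun n : ℕ => (n : ℂ) ^ s).prod = (l.prod : ℂ) ^ s := by
  induction l with
  | nil => simp
  | cons a l ih =>
    rw [List.map_cons, List.prod_cons, ih, List.prod_cons, Nat.cast_mul, natCast_mul_natCast_cpow]

lemma norm_natCast_cpow_le (n : ℕ) (s : ℂ) : ‖(n : ℂ) ^ s‖ ≤ (n : ℝ) ^ s.re := by
  rcases Nat.eq_zero_or_pos n with rfl | hn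
  · by_cases hs : s = 0
    · simp [hs]
    · simp [zero_cpow hs, Real.rpow_nonneg]
  · exact (norm_natCast_cpow_of_pos hn s).le

section TupleProducts

variable {ι R : Type*} [NormedCommRing R] {f : ι → R}

lemma summable_norm_prod_fin (hf : Summable (‖f ·‖)) (n : ℕ) :
    Summable fun v : Fin n → ι => ‖∏ i, f (v i)‖ := by
  induction n with
  | zero => exact .of_finite
  | succ n ih =>
    rw [← (Fin.consEquiv fun _ => ι).summable_iff]
    simpa [Function.comp_def, Fin.prod_univ_succ] using hf.mul_norm ih

lemma hasSum_prod_fin [CompleteSpace R] (hf : Summable (‖f ·‖)) (n : ℕ) :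
    HasSum (fun v : Fin n → ι => ∏ i, f (v i)) ((∑' i, f i) ^ n) := by
  induction n with
  | zero => simp
  | succ n ih =>
    rw [← (Fin.consEquiv fun _ => ι).hasSum_iff, pow_succ', ← ih.tsum_eq,
      tsum_mul_tsum_of_summable_norm hf (summable_norm_prod_fin hf n)]
    simpa [Function.comp_def, Fin.prod_univ_succ] using
      (summable_mul_of_summable_norm hf (summable_norm_prod_fin hf n)).hasSum

end TupleProducts

lemma hasSum_list_prod_map {ι K : Type*} [NormedField K] [CompleteSpace K] {f : ι → K}
    (hf : Summable (‖f ·‖)) (hlt : ∑' i, ‖f i‖ < 1) :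
    HasSum (fun L : List ι => (L.map f).prod) (1 - ∑' i, f i)⁻¹ := by
  set F : (Σ n, Fin n → ι) → K := fun x => ∏ i, f (x.2 i)
  have hF : Summable (‖F ·‖) := by
    refine (summable_sigma_of_nonneg fun _ => norm_nonneg _).2
      ⟨summable_norm_prod_fin hf, ?_⟩
    have hnorm n : ∑' v : Fin n → ι, ‖F ⟨n, v⟩‖ = (∑' i, ‖f i‖) ^ n := by
      simpa [F, norm_prod] using
        (hasSum_prod_fin (f := fun i => ‖f i‖) (by simpa using hf) n).tsum_eq
    simpa [hnorm] using summable_geometric_of_lt_one (tsum_nonneg fun _ => norm_nonneg _) hlt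
  have hsum : ∑' x, F x = (1 - ∑' i, f i)⁻¹ :=
    (hF.of_norm.hasSum.sigma (hasSum_prod_fin hf)).unique
      (hasSum_geometric_of_norm_lt_one ((norm_tsum_le_tsum_norm hf).trans_lt hlt))
  have h := List.equivSigmaTuple.hasSum_iff.2 (hsum ▸ hF.of_norm.hasSum)
  simpa [Function.comp_def, List.equivSigmaTuple, F] using h

theorem composition_dirichlet_series_general
    (T : Set ℕ) (s z : ℂ)
    (hsum : Summable (fun n : T => ((n : ℕ) : ℝ) ^ (-s.re)))
    (hlt : ‖z‖ * ∑' n : T, ((n : ℕ) : ℝ) ^ (-s.re) < 1) :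
    Summable (fun c : {l : List ℕ // ∀ i ∈ l, i ∈ T} =>
        z ^ c.val.length * ((c.val.prod : ℕ) : ℂ) ^ (-s)) ∧
    1 - z * ∑' n : T, ((n : ℕ) : ℂ) ^ (-s) ≠ 0 ∧
    ∑' c : {l : List ℕ // ∀ i ∈ l, i ∈ T},
        z ^ c.val.length * ((c.val.prod : ℕ) : ℂ) ^ (-s)
      = (1 - z * ∑' n : T, ((n : ℕ) : ℂ) ^ (-s))⁻¹ := by
  set f : T → ℂ := fun n => z * ((n : ℕ) : ℂ) ^ (-s)
  have hf_le n : ‖f n‖ ≤ ‖z‖ * ((n : ℕ) : ℝ) ^ (-s.re) := by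
    simpa [f, norm_mul] using
      mul_le_mul_of_nonneg_left (norm_natCast_cpow_le n (-s)) (norm_nonneg z)
  have hf : Summable (‖f ·‖) :=
    (hsum.mul_left ‖z‖).of_nonneg_of_le (fun _ => norm_nonneg _) hf_le
  have hf_lt : ∑' n, ‖f n‖ < 1 := by
    refine lt_of_le_of_lt ?_ hlt
    rw [← tsum_mul_left]
    exact hf.tsum_le_tsum hf_le (hsum.mul_left ‖z‖)
  have hterm (c : {l : List ℕ // ∀ i ∈ l, i ∈ T}) :
      ((listForallMemEquiv T c).map f).prod =
        z ^ c.val.length * ((c.val.prod : ℕ) : ℂ) ^ (-s) := by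
    rw [← map_val_listForallMemEquiv T c]
    simp [f, List.prod_map_mul, List.prod_map_natCast_cpow]
  have h := (listForallMemEquiv T).hasSum_iff.2 (hasSum_list_prod_map hf hf_lt)
  simp only [Function.comp_def, hterm, f, tsum_mul_left] at h
  refine ⟨h.summable, ?_, h.tsum_eq⟩
  rw [← tsum_mul_left]
  exact (isUnit_one_sub_of_norm_lt_one ((norm_tsum_le_tsum_norm hf).trans_lt hf_lt)).ne_zero

/-- **Composition Dirichlet series with length parameter.** For `T* ⊆ {n : 2 ≤ n}` and
`s, z ∈ ℂ` with `|z| ∑_{n∈T*} n^{-Re s} < 1`, the family `z^{ℓ(c)} N(c)^{-s}` over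
compositions with parts in `T*` is summable, `1 - z ∑_{n∈T*} n^{-s} ≠ 0`, and the sum
equals `1/(1 - z ∑_{n∈T*} n^{-s})`. -/
theorem composition_dirichlet_series
    (T : Set ℕ) (hT : ∀ n ∈ T, 2 ≤ n) (s z : ℂ)
    (hsum : Summable (fun n : T => ((n : ℕ) : ℝ) ^ (-s.re)))
    (hlt : ‖z‖ * ∑' n : T, ((n : ℕ) : ℝ) ^ (-s.re) < 1) :
    Summable (fun c : {l : List ℕ // ∀ i ∈ l, i ∈ T} =>
        z ^ c.val.length * ((c.val.prod : ℕ) : ℂ) ^ (-s)) ∧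
    1 - z * ∑' n : T, ((n : ℕ) : ℂ) ^ (-s) ≠ 0 ∧
    ∑' c : {l : List ℕ // ∀ i ∈ l, i ∈ T},
        z ^ c.val.length * ((c.val.prod : ℕ) : ℂ) ^ (-s)
      = (1 - z * ∑' n : T, ((n : ℕ) : ℂ) ^ (-s))⁻¹ :=
  composition_dirichlet_series_general T s z hsum hlt
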